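/- The blending operator Λ[m⁻, m⁺] = (1−λ)m⁻ + λm⁺ with λ chosen by the limiter formula produces a nonnegative field: if m⁺_j ≥ 0 for all j, and λ = 0 when all m⁻_j ≥ 0, else λ = max over negative entries l of (−m⁻_l)/(m⁺_l − m⁻_l), then λ ∈ [0,1] and (1−λ)m⁻_j + λm⁺_j ≥ 0 for all j. -/
import Mathlib


open Finset

/-- the limiter coefficient λ lies in [0,1] and the blended field
`(1−λ)m⁻ + λm⁺` is nonnegative. -/
theorem stmt10 (N : ℕ) (mm mp : Fin N → ℝ) (hp : ∀ j, 0 ≤ mp j)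
    (lam : ℝ)
    (hlam0 : (∀ j, 0 ≤ mm j) → lam = 0)
    (hlam1 : ∀ hne : (Finset.univ.filter fun l => mm l < 0).Nonempty,
      lam = (Finset.univ.filter fun l => mm l < 0).sup' hne
        (fun l => (-mm l) / (mp l - mm l))) :
    (0 ≤ lam ∧ lam ≤ 1) ∧ ∀ j, 0 ≤ (1 - lam) * mm j + lam * mp j := by
  by_cases hall : ∀ j, 0 ≤ mm j
  · have h0 := hlam0 hall
    subst h0
    refine ⟨⟨le_refl 0, zero_le_one⟩, fun j => by simpa using hall j⟩
  · push_neg at hall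
    obtain ⟨j0, hj0⟩ := hall
    have hne : (Finset.univ.filter fun l => mm l < 0).Nonempty :=
      ⟨j0, by simp [hj0]⟩
    have hlam := hlam1 hne
    have hden : ∀ l, mm l < 0 → 0 < mp l - mm l := fun l hl =>
      sub_pos.mpr (lt_of_lt_of_le hl (hp l))
    -- each ratio in (0,1]
    have hratio : ∀ l ∈ (Finset.univ.filter fun l => mm l < 0),
        0 ≤ (-mm l) / (mp l - mm l) ∧ (-mm l) / (mp l - mm l) ≤ 1 := by
      intro l hl
      simp only [mem_filter] at hl
      have hd := hden l hl.2
      constructor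
      · exact div_nonneg (by linarith) hd.le
      · rw [div_le_one hd]; linarith [hp l]
    have hlam_nonneg : 0 ≤ lam := by
      rw [hlam]
      obtain ⟨l, hl⟩ := hne
      exact le_trans (hratio l hl).1 (le_sup' (fun l => (-mm l) / (mp l - mm l)) hl)
    have hlam_le : lam ≤ 1 := by
      rw [hlam]
      exact Finset.sup'_le _ _ fun l hl => (hratio l hl).2
    refine ⟨⟨hlam_nonneg, hlam_le⟩, fun j => ?_⟩
    by_cases hj : 0 ≤ mm j
    · have := hp j
      nlinarith
    · push_neg at hj
      have hd := hden j hj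
      have hmem : j ∈ (Finset.univ.filter fun l => mm l < 0) := by simp [hj]
      have hge : (-mm j) / (mp j - mm j) ≤ lam := hlam ▸ le_sup' (fun l => (-mm l) / (mp l - mm l)) hmem
      have : -mm j ≤ lam * (mp j - mm j) := by
        rw [div_le_iff₀ hd] at hge; linarith
      nlinarith
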